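/- arXiv:1207.2977 — 4 statements merged into one kernel-verified Lean document; each statement's English description precedes it below -/
import Mathlib

section
/- Let G be the simple graph on vertex set {0, 1, 2, 3} with edge set {{0,1}, {1,2}, {2,3}, {3,0}, {0,2}} (the graph K4 minus one edge, which is the unique maximal outerplanar graph of order 4). Then for every integer k ≥ 0, G is k-edge magic if and only if k ≡ 2 (mod 4). -/
open scoped Classical in
/-- A finite simple graph `G` on a finite vertex type is `k`-edge magic if there is a
labeling of its edges that is a bijection onto `{k, k+1, ..., k+q-1}` (where `q` is the
number of edges) such that all the induced vertex sums (the sum of the labels of the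
edges incident to a vertex) are congruent modulo the number of vertices. -/
def IsKEdgeMagic {V : Type*} [Fintype V] (G : SimpleGraph V) (k : ℕ) : Prop :=
  ∃ f : Sym2 V → ℕ,
    Set.BijOn f G.edgeSet ((fun i => k + i) '' Set.Iio G.edgeFinset.card) ∧
    ∃ c : ZMod (Fintype.card V),
      ∀ v : V, ((∑ e ∈ G.incidenceFinset v, f e : ℕ) : ZMod (Fintype.card V)) = c

/-- A concrete simple graph on `Fin 4`. -/
def G2 : SimpleGraph (Fin 4) where
  Adj a b := a ≠ b ∧ s(a,b) ∈ ({s(0,1), s(1,2), s(2,3), s(3,0), s(0,2)} : Finset (Sym2 (Fin 4)))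
  symm := ⟨fun a b h => ⟨h.1.symm, by rw [show s(b,a) = s(a,b) from Sym2.eq_swap]; exact h.2⟩⟩
  loopless := ⟨fun a h => h.1 rfl⟩


/-!
Write the labels as `k + σ e` with `σ` a bijection from the five edges onto `{0, …, 4}`, and
let the offsets of `01, 12, 23, 30, 02` be `α, β, γ, δ, ε`. Comparing the vertex sums modulo 4
gives `δ + ε + k ≡ β` (vertices 0 and 1), `β + ε + k ≡ δ` (vertices 2 and 3) and
`α + β ≡ γ + δ` (vertices 1 and 3); hence `β ≡ δ` and `α ≡ γ` modulo 2. Two disjoint pairs of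
equal parity in `{0, …, 4}` must be `{1, 3}` and one of `{0, 2}`, `{2, 4}`, so `ε ≡ 0` and
`β - δ ≡ 2` modulo 4, and the first congruence becomes `k ≡ 2`. Conversely, for `k ≡ 2` the
labels `k + 2, k + 1, k + 4, k + 3, k` on `01, 12, 23, 30, 02` are magic.
-/

theorem List.Nodup.bijOn_idxOf {α : Type*} [DecidableEq α] {l : List α} (hl : l.Nodup) :
    Set.BijOn l.idxOf {x | x ∈ l} (Set.Iio l.length) :=
  ⟨fun _ hx => List.idxOf_lt_length_of_mem hx, fun _ hx _ _ hxy => (List.idxOf_inj hx).1 hxy,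
    fun i hi => ⟨l[i], List.getElem_mem hi, hl.idxOf_getElem i hi⟩⟩

theorem SimpleGraph.sum_incidenceFinset_congr {V : Type*} {G : SimpleGraph V} [DecidableEq V]
    {v : V} [Fintype (G.neighborSet v)] {f g : Sym2 V → ℕ} (hfg : Set.EqOn f g G.edgeSet) :
    ∑ e ∈ G.incidenceFinset v, f e = ∑ e ∈ G.incidenceFinset v, g e :=
  Finset.sum_congr rfl fun _ he =>
    hfg (G.incidenceSet_subset v ((G.mem_incidenceFinset v _).1 he))

open scoped Classical in
theorem isKEdgeMagic_iff_exists_bijOn_Iio {V : Type*} [Fintype V] (G : SimpleGraph V) (k : ℕ) :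
    IsKEdgeMagic G k ↔ ∃ g : Sym2 V → ℕ, Set.BijOn g G.edgeSet (Set.Iio G.edgeFinset.card) ∧
      ∃ c : ZMod (Fintype.card V),
        ∀ v, ((∑ e ∈ G.incidenceFinset v, (k + g e) : ℕ) : ZMod (Fintype.card V)) = c := by
  constructor
  · rintro ⟨f, hf, c, hc⟩
    have hle : ∀ e ∈ G.edgeSet, k ≤ f e := fun e he => by
      obtain ⟨i, -, hi⟩ := hf.mapsTo he
      exact hi ▸ Nat.le_add_right k i
    refine ⟨fun e => f e - k, ⟨fun e he => ?_, fun x hx y hy hxy => ?_, fun i hi => ?_⟩, c,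
      fun v => ?_⟩
    · obtain ⟨i, hi, hfi⟩ := hf.mapsTo he
      simpa [← hfi] using hi
    · have := hle x hx
      have := hle y hy
      exact hf.injOn hx hy (by simp only at hxy; omega)
    · obtain ⟨e, he, hfe⟩ := hf.surjOn ⟨i, hi, rfl⟩
      exact ⟨e, he, by simp [hfe]⟩
    · rw [← hc v, G.sum_incidenceFinset_congr fun e he => Nat.add_sub_of_le (hle e he)]
  · rintro ⟨g, hg, c, hc⟩
    exact ⟨fun e => k + g e, (add_right_injective k).injOn.bijOn_image.comp hg, c, hc⟩

theorem exists_forall_natCast_eq_iff_modEq {ι : Type*} (n : ℕ) (S : ι → ℕ) (i₀ : ι) :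
    (∃ c : ZMod n, ∀ i, (S i : ZMod n) = c) ↔ ∀ i, S i ≡ S i₀ [MOD n] := by
  simp only [← ZMod.natCast_eq_natCast_iff]
  exact ⟨fun ⟨c, hc⟩ i => (hc i).trans (hc i₀).symm, fun h => ⟨_, h⟩⟩

theorem mod_four_of_nodup_of_lt_five {α β γ δ ε : ℕ} (hα : α < 5) (hβ : β < 5) (hγ : γ < 5)
    (hδ : δ < 5) (hε : ε < 5) (hnodup : [α, β, γ, δ, ε].Nodup) (hβδ : β % 2 = δ % 2)
    (hsum : (α + β) % 4 = (γ + δ) % 4) : ε % 4 = 0 ∧ (β + 2) % 4 = δ % 4 := by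
  have key : ∀ α β γ δ ε : Fin 5, [α, β, γ, δ, ε].Nodup → (β : ℕ) % 2 = δ % 2 →
      ((α : ℕ) + β) % 4 = (γ + δ : ℕ) % 4 → (ε : ℕ) % 4 = 0 ∧ ((β : ℕ) + 2) % 4 = δ % 4 := by
    decide
  exact key ⟨α, hα⟩ ⟨β, hβ⟩ ⟨γ, hγ⟩ ⟨δ, hδ⟩ ⟨ε, hε⟩ (List.Nodup.of_map Fin.val
    (l := [⟨α, hα⟩, ⟨β, hβ⟩, ⟨γ, hγ⟩, ⟨δ, hδ⟩, ⟨ε, hε⟩]) hnodup) hβδ hsum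

namespace G2

/-- Labelling the edges of `G2` in this order by `k, k + 1, …, k + 4` is magic when
`k ≡ 2 [MOD 4]`. -/
def magicEdgeOrder : List (Sym2 (Fin 4)) := [s(0,2), s(1,2), s(0,1), s(3,0), s(2,3)]

theorem magicEdgeOrder_nodup : magicEdgeOrder.Nodup := by decide

theorem edgeSet_eq : G2.edgeSet = {e | e ∈ magicEdgeOrder} := by
  ext e
  induction e using Sym2.ind with
  | _ a b =>
    change (a ≠ b ∧ s(a,b) ∈ ({s(0,1), s(1,2), s(2,3), s(3,0), s(0,2)} : Finset _)) ↔ _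
    revert a b
    decide

theorem edgeFinset_eq [Fintype G2.edgeSet] : G2.edgeFinset = magicEdgeOrder.toFinset := by
  ext e
  simp [edgeSet_eq]

theorem card_edgeFinset [Fintype G2.edgeSet] : G2.edgeFinset.card = 5 := by
  rw [edgeFinset_eq, List.toFinset_card_of_nodup magicEdgeOrder_nodup]
  rfl

theorem sum_incidenceFinset [DecidableEq (Fin 4)] (v : Fin 4) [Fintype (G2.neighborSet v)]
    (f : Sym2 (Fin 4) → ℕ) :
    ∑ e ∈ G2.incidenceFinset v, f e = ![f s(0,1) + f s(3,0) + f s(0,2), f s(0,1) + f s(1,2),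
      f s(1,2) + f s(2,3) + f s(0,2), f s(2,3) + f s(3,0)] v := by
  -- the kernel can only evaluate membership tests with the computable instance
  obtain rfl : ‹DecidableEq (Fin 4)› = instDecidableEqFin 4 := Subsingleton.elim _ _
  classical
  rw [SimpleGraph.incidenceFinset_eq_filter, Finset.sum_filter, edgeFinset_eq,
    List.sum_toFinset _ magicEdgeOrder_nodup]
  fin_cases v <;> simp [magicEdgeOrder, add_comm, add_left_comm]

theorem modEq_two_of_offsets {k : ℕ} {g : Sym2 (Fin 4) → ℕ}
    (hg : Set.BijOn g {e | e ∈ magicEdgeOrder} (Set.Iio 5))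
    (h0 : k + g s(0,1) + (k + g s(3,0)) + (k + g s(0,2)) ≡ k + g s(0,1) + (k + g s(1,2)) [MOD 4])
    (h2 : k + g s(1,2) + (k + g s(2,3)) + (k + g s(0,2)) ≡ k + g s(0,1) + (k + g s(1,2)) [MOD 4])
    (h3 : k + g s(2,3) + (k + g s(3,0)) ≡ k + g s(0,1) + (k + g s(1,2)) [MOD 4]) :
    k ≡ 2 [MOD 4] := by
  have hsub : [s(0,1), s(1,2), s(2,3), s(3,0), s(0,2)] ⊆ magicEdgeOrder := by decide
  have hnodup := (by decide : [s(0,1), s(1,2), s(2,3), s(3,0), s((0 : Fin 4), 2)].Nodup).map_on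
    fun x hx y hy hxy => hg.injOn (hsub hx) (hsub hy) hxy
  have hlt : ∀ e ∈ [s(0,1), s(1,2), s(2,3), s(3,0), s((0 : Fin 4), 2)], g e < 5 :=
    fun e he => hg.mapsTo (hsub he)
  simp only [List.forall_mem_cons, List.not_mem_nil, IsEmpty.forall_iff, implies_true,
    and_true] at hlt
  obtain ⟨h01, h12, h23, h30, h02⟩ := hlt
  unfold Nat.ModEq at h0 h2 h3 ⊢
  obtain ⟨hε, hβδ⟩ :=
    mod_four_of_nodup_of_lt_five h01 h12 h23 h30 h02 hnodup (by omega) (by omega)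
  omega

end G2

theorem kEdgeMagic_iff_2 (k : ℕ) : IsKEdgeMagic G2 k ↔ k ≡ 2 [MOD 4] := by
  classical
  simp only [isKEdgeMagic_iff_exists_bijOn_Iio, G2.card_edgeFinset, G2.edgeSet_eq,
    G2.sum_incidenceFinset, exists_forall_natCast_eq_iff_modEq _ _ (1 : Fin 4), Fintype.card_fin]
  constructor
  · rintro ⟨g, hg, hsums⟩
    exact G2.modEq_two_of_offsets hg (hsums 0) (hsums 2) (hsums 3)
  · intro hk
    refine ⟨_, G2.magicEdgeOrder_nodup.bijOn_idxOf, fun i => ?_⟩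
    unfold Nat.ModEq at hk ⊢
    fin_cases i <;> simp [G2.magicEdgeOrder] <;> omega
end

section
/- Let G be the simple graph on vertex set {0, 1, 2, 3, 4} with edge set {{0,1}, {1,2}, {2,3}, {3,4}, {4,0}, {0,2}, {0,3}} (the fan obtained by triangulating a pentagon, which is the unique maximal outerplanar graph of order 5 up to isomorphism). Then for every integer k ≥ 0, G is k-edge magic if and only if k ≡ 2 (mod 5). -/
/-- A concrete simple graph on `Fin 5`. -/
def G3 : SimpleGraph (Fin 5) where
  Adj a b := a ≠ b ∧ s(a,b) ∈ ({s(0,1), s(1,2), s(2,3), s(3,4), s(4,0), s(0,2), s(0,3)} : Finset (Sym2 (Fin 5)))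
  symm := ⟨fun a b h => ⟨h.1.symm, by rw [show s(b,a) = s(a,b) from Sym2.eq_swap]; exact h.2⟩⟩
  loopless := ⟨fun a h => h.1 rfl⟩

/-!
Summing the vertex sums counts every label twice, so a `k`-edge magic labeling of a graph with
`p` vertices and `q` edges forces `2 (k + (k + 1) + ⋯ + (k + q - 1)) = q (2k + q - 1) ≡ 0 (mod p)`;
for `p = 5`, `q = 7` this says `k ≡ 2 (mod 5)`. Conversely, shifting every label by the same
multiple of `p` changes no vertex sum modulo `p`, so `k`-edge magic only depends on `k mod p`,
and it suffices to exhibit one `2`-edge magic labeling of the fan.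
-/

open Finset

namespace SimpleGraph

variable {V : Type*} [Fintype V] [DecidableEq V] (G : SimpleGraph V)
  [∀ v, Fintype (G.neighborSet v)] [Fintype G.edgeSet]

theorem sum_sum_incidenceFinset {M : Type*} [AddCommMonoid M] (f : Sym2 V → M) :
    ∑ v, ∑ e ∈ G.incidenceFinset v, f e = 2 • ∑ e ∈ G.edgeFinset, f e := by
  simp_rw [incidenceFinset_eq_filter, sum_filter]
  rw [sum_comm, smul_sum]
  refine sum_congr rfl fun e he => ?_
  rw [← sum_filter, sum_const, ← Sym2.card_toFinset_of_not_isDiag e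
    (G.not_isDiag_of_mem_edgeSet (mem_edgeFinset.mp he))]
  congr 2
  ext v
  simp

end SimpleGraph

theorem two_mul_sum_of_bijOn_image_add_Iio {α : Type*} {s : Finset α} {f : α → ℕ} {k q : ℕ}
    (hf : Set.BijOn f s ((fun i => k + i) '' Set.Iio q)) :
    2 * ∑ e ∈ s, f e = q * (2 * k + q - 1) := by
  have hsum : ∑ e ∈ s, f e = ∑ n ∈ (range q).image (k + ·), n := by
    refine sum_nbij f (fun a ha => ?_) hf.injOn ?_ fun _ _ => rfl
    · simpa using hf.mapsTo ha
    · simpa using hf.surjOn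
  rw [hsum, sum_image fun _ _ _ _ => Nat.add_left_cancel, sum_add_distrib, sum_const,
    card_range, smul_eq_mul, mul_add, mul_comm 2 (∑ i ∈ _, i), sum_range_id_mul_two]
  rcases q with _ | q
  · simp
  · rw [show 2 * k + (q + 1) - 1 = 2 * k + q by omega, Nat.add_sub_cancel]
    ring

theorem bijOn_sub_add_image_add_Iio (k k' q : ℕ) :
    Set.BijOn (fun n => n - k + k') ((fun i => k + i) '' Set.Iio q)
      ((fun i => k' + i) '' Set.Iio q) := by
  refine ⟨?_, ?_, ?_⟩
  · rintro _ ⟨i, hi, rfl⟩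
    exact ⟨i, hi, by dsimp only; omega⟩
  · rintro _ ⟨i, -, rfl⟩ _ ⟨j, -, rfl⟩ h
    dsimp only at h ⊢
    omega
  · rintro _ ⟨i, hi, rfl⟩
    exact ⟨k + i, ⟨i, hi, rfl⟩, by dsimp only; omega⟩

namespace IsKEdgeMagic

variable {V : Type*} [Fintype V] {G : SimpleGraph V} {k k' : ℕ}

theorem iff_of_coe_eq_edgeSet [DecidableEq V] {s : Finset (Sym2 V)}
    (hs : (s : Set (Sym2 V)) = G.edgeSet) :
    IsKEdgeMagic G k ↔ ∃ f : Sym2 V → ℕ, Set.BijOn f s ((fun i => k + i) '' Set.Iio #s) ∧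
      ∃ c : ZMod (Fintype.card V),
        ∀ v, ((∑ e ∈ s with v ∈ e, f e : ℕ) : ZMod (Fintype.card V)) = c := by
  classical
  have hE : G.edgeFinset = s := coe_injective (G.coe_edgeFinset.trans hs.symm)
  simp only [IsKEdgeMagic, hE, ← hs]
  congr!
  ext e
  simp [← hs, SimpleGraph.incidenceSet]

open scoped Classical in
theorem natCast_card_edgeFinset_mul_eq_zero (h : IsKEdgeMagic G k) :
    ((#G.edgeFinset * (2 * k + #G.edgeFinset - 1) : ℕ) : ZMod (Fintype.card V)) = 0 := by
  obtain ⟨f, hf, c, hc⟩ := h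
  rw [← G.coe_edgeFinset] at hf
  calc ((#G.edgeFinset * (2 * k + #G.edgeFinset - 1) : ℕ) : ZMod (Fintype.card V))
      = ((2 • ∑ e ∈ G.edgeFinset, f e : ℕ) : ZMod (Fintype.card V)) := by
        rw [smul_eq_mul, two_mul_sum_of_bijOn_image_add_Iio hf]
    _ = ∑ v, ((∑ e ∈ G.incidenceFinset v, f e : ℕ) : ZMod (Fintype.card V)) := by
        rw [← G.sum_sum_incidenceFinset, Nat.cast_sum]
    _ = 0 := by simp [hc]

theorem of_modEq (h : IsKEdgeMagic G k) (hk : k ≡ k' [MOD Fintype.card V]) :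
    IsKEdgeMagic G k' := by
  classical
  obtain ⟨f, hf, c, hc⟩ := h
  refine ⟨fun e => f e - k + k', (bijOn_sub_add_image_add_Iio k k' _).comp hf, c, fun v => ?_⟩
  rw [← hc v, Nat.cast_sum, Nat.cast_sum]
  refine sum_congr rfl fun e he => ?_
  obtain ⟨i, -, hi⟩ := hf.mapsTo (G.mem_edgeFinset.mp (G.incidenceFinset_subset v he))
  have hkk' : (k : ZMod (Fintype.card V)) = k' := (ZMod.natCast_eq_natCast_iff _ _ _).mpr hk
  rw [← hi, Nat.add_sub_cancel_left, Nat.cast_add, Nat.cast_add, hkk', add_comm]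

end IsKEdgeMagic

theorem edgeSet_G3 : G3.edgeSet =
    ↑({s(0,1), s(1,2), s(2,3), s(3,4), s(4,0), s(0,2), s(0,3)} : Finset (Sym2 (Fin 5))) := by
  ext e
  induction e using Sym2.ind with
  | _ a b =>
    refine ⟨And.right, fun h => ⟨?_, h⟩⟩
    revert a b
    decide

theorem card_edgeFinset_G3 [Fintype G3.edgeSet] : #G3.edgeFinset = 7 := by
  rw [coe_injective (G3.coe_edgeFinset.trans edgeSet_G3)]
  rfl

theorem isKEdgeMagic_G3_two : IsKEdgeMagic G3 2 := by
  rw [IsKEdgeMagic.iff_of_coe_eq_edgeSet edgeSet_G3.symm, ← coe_range, ← coe_image]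
  -- the `i`-th listed edge gets label `2 + i`; the vertex sums are `21, 6, 16, 16, 11`
  exact ⟨fun e => 2 + [s(0,1), s(3,4), s(1,2), s(0,2), s(0,3), s(2,3), s(4,0)].idxOf e,
    by decide, 1, by decide⟩

theorem kEdgeMagic_iff_3 (k : ℕ) : IsKEdgeMagic G3 k ↔ k ≡ 2 [MOD 5] := by
  classical
  refine ⟨fun h => ?_, fun hk => isKEdgeMagic_G3_two.of_modEq hk.symm⟩
  have h5 := h.natCast_card_edgeFinset_mul_eq_zero
  rw [card_edgeFinset_G3, Fintype.card_fin, ZMod.natCast_eq_zero_iff] at h5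
  unfold Nat.ModEq
  omega
end

section
/- Let G be the simple graph on vertex set {0, 1, 2, 3, 4, 5, 6} whose edge set consists of the heptagon edges {{0,1}, {1,2}, {2,3}, {3,4}, {4,5}, {5,6}, {6,0}} together with the chords {{0,2}, {0,3}, {0,4}, {0,5}} (the fan triangulation of the heptagon, a maximal outerplanar graph of order 7). Then for every integer k ≥ 0, G is k-edge magic if and only if k ≡ 2 (mod 7). -/
/-- A concrete simple graph on `Fin 7`. -/
def G4 : SimpleGraph (Fin 7) where
  Adj a b := a ≠ b ∧ s(a,b) ∈ ({s(0,1), s(1,2), s(2,3), s(3,4), s(4,5), s(5,6), s(6,0), s(0,2), s(0,3), s(0,4), s(0,5)} : Finset (Sym2 (Fin 7)))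
  symm := ⟨fun a b h => ⟨h.1.symm, by rw [show s(b,a) = s(a,b) from Sym2.eq_swap]; exact h.2⟩⟩
  loopless := ⟨fun a h => h.1 rfl⟩

open Finset

theorem SimpleGraph.sum_sum_incidenceFinset_eq_two_nsmul {V M : Type*} [Fintype V] [DecidableEq V]
    [AddCommMonoid M] (G : SimpleGraph V) [Fintype G.edgeSet] [∀ v, Fintype (G.neighborSet v)]
    (f : Sym2 V → M) :
    ∑ v, ∑ e ∈ G.incidenceFinset v, f e = 2 • ∑ e ∈ G.edgeFinset, f e := by
  calc ∑ v, ∑ e ∈ G.incidenceFinset v, f e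
      = ∑ e ∈ G.edgeFinset, ∑ _v ∈ e.toFinset, f e := by
        simp_rw [G.incidenceFinset_eq_filter]
        exact sum_comm' (by simp [Sym2.mem_toFinset, and_comm])
    _ = 2 • ∑ e ∈ G.edgeFinset, f e := by
        rw [smul_sum]
        refine sum_congr rfl fun e he => ?_
        rw [sum_const, Sym2.card_toFinset_of_not_isDiag e
          (G.not_isDiag_of_mem_edgeSet (G.mem_edgeFinset.mp he))]

variable {V : Type*} [Fintype V] {G : SimpleGraph V} {k : ℕ}

-- `IsKEdgeMagic` is stated with classical instances; this form accepts any instances, so that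
-- for a concrete graph the conditions can be checked by `decide`.
theorem isKEdgeMagic_iff [DecidableEq V] [Fintype G.edgeSet] [∀ v, Fintype (G.neighborSet v)] :
    IsKEdgeMagic G k ↔ ∃ f : Sym2 V → ℕ,
      Set.BijOn f G.edgeSet ((fun i => k + i) '' Set.Iio #G.edgeFinset) ∧
      ∃ c : ZMod (Fintype.card V),
        ∀ v, ((∑ e ∈ G.incidenceFinset v, f e : ℕ) : ZMod (Fintype.card V)) = c := by
  unfold IsKEdgeMagic
  convert Iff.rfl

namespace IsKEdgeMagic

theorem card_dvd [Fintype G.edgeSet] (h : IsKEdgeMagic G k) :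
    Fintype.card V ∣ 2 * #G.edgeFinset * k + #G.edgeFinset * (#G.edgeFinset - 1) := by
  classical
  obtain ⟨f, hf, c, hc⟩ := isKEdgeMagic_iff.mp h
  set q := #G.edgeFinset
  have hlabels : G.edgeFinset.image f = (range q).image (fun i => k + i) := by
    apply coe_injective
    rw [coe_image, coe_image, G.coe_edgeFinset, hf.image_eq, coe_range]
  have hsum : ∑ e ∈ G.edgeFinset, f e = ∑ i ∈ range q, (k + i) := by
    calc ∑ e ∈ G.edgeFinset, f e = ∑ x ∈ G.edgeFinset.image f, x :=
          (sum_image (f := id) (G.coe_edgeFinset ▸ hf.injOn)).symm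
      _ = ∑ i ∈ range q, (k + i) := by
          rw [hlabels, sum_image (add_right_injective k).injOn]
  have hdouble : 2 * ∑ i ∈ range q, (k + i) = 2 * q * k + q * (q - 1) := by
    rw [sum_add_distrib, ← sum_range_id_mul_two]
    simp only [sum_const, card_range, smul_eq_mul]
    ring
  rw [← ZMod.natCast_eq_zero_iff]
  calc ((2 * q * k + q * (q - 1) : ℕ) : ZMod (Fintype.card V))
      = ∑ v, ((∑ e ∈ G.incidenceFinset v, f e : ℕ) : ZMod (Fintype.card V)) := by
        rw [← hdouble, ← hsum, ← smul_eq_mul, ← G.sum_sum_incidenceFinset_eq_two_nsmul,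
          Nat.cast_sum]
    _ = 0 := by simp [hc]

theorem add_card_mul (h : IsKEdgeMagic G k) (m : ℕ) :
    IsKEdgeMagic G (k + Fintype.card V * m) := by
  classical
  obtain ⟨f, hf, c, hc⟩ := isKEdgeMagic_iff.mp h
  refine isKEdgeMagic_iff.mpr ⟨fun e => f e + Fintype.card V * m, ?_, c, fun v => ?_⟩
  · have hshift : Set.BijOn (· + Fintype.card V * m) ((fun i => k + i) '' Set.Iio #G.edgeFinset)
        ((fun i => k + Fintype.card V * m + i) '' Set.Iio #G.edgeFinset) := by
      convert (add_left_injective (Fintype.card V * m)).injOn.bijOn_image using 1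
      rw [Set.image_image]
      congr 1 with i
      ring
    exact hshift.comp hf
  · simp [sum_add_distrib, hc v]

theorem of_image_eq [DecidableEq V] [Fintype G.edgeSet] [∀ v, Fintype (G.neighborSet v)]
    (f : Sym2 V → ℕ) (hf : G.edgeFinset.image f = (range #G.edgeFinset).image (fun i => k + i))
    (c : ZMod (Fintype.card V))
    (hc : ∀ v, ((∑ e ∈ G.incidenceFinset v, f e : ℕ) : ZMod (Fintype.card V)) = c) :
    IsKEdgeMagic G k := by
  have hinj : Set.InjOn f G.edgeFinset := by
    rw [← card_image_iff, hf,
      card_image_of_injective _ (add_right_injective k), card_range]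
  refine isKEdgeMagic_iff.mpr ⟨f, ?_, c, hc⟩
  convert hinj.bijOn_image using 1
  · exact G.coe_edgeFinset.symm
  · rw [← coe_image, hf, coe_image, coe_range]

end IsKEdgeMagic

instance : DecidableRel G4.Adj := fun a b =>
  inferInstanceAs (Decidable (a ≠ b ∧ _))

theorem G4_card_edgeFinset : #G4.edgeFinset = 11 := by decide

-- Labeling the `i`-th edge of this list by `2 + i` makes every vertex sum `≡ 5 (mod 7)`.
def G4MagicOrder : List (Sym2 (Fin 7)) :=
  [s(0,1), s(1,2), s(2,3), s(4,5), s(0,4), s(0,3), s(3,4), s(6,0), s(5,6), s(0,5), s(0,2)]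

theorem isKEdgeMagic_G4_two : IsKEdgeMagic G4 2 :=
  IsKEdgeMagic.of_image_eq (fun e => 2 + G4MagicOrder.idxOf e) (by decide) 5 (by decide)

theorem kEdgeMagic_iff_4 (k : ℕ) : IsKEdgeMagic G4 k ↔ k ≡ 2 [MOD 7] := by
  constructor
  · intro h
    have h7 := h.card_dvd
    rw [G4_card_edgeFinset, Fintype.card_fin] at h7
    unfold Nat.ModEq
    omega
  · intro hk
    obtain ⟨m, rfl⟩ : ∃ m, k = 2 + 7 * m := ⟨k / 7, by unfold Nat.ModEq at hk; omega⟩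
    simpa using isKEdgeMagic_G4_two.add_card_mul m
end

section
/- For every integer n ≥ 3 and every integer k ≥ 0, the cycle graph C_n on n vertices is not k-edge magic. -/
open Finset

theorem ZMod.injOn_natCast_image_add_Iio (k : ℕ) {q N : ℕ} (hqN : q ≤ N) :
    Set.InjOn (Nat.cast : ℕ → ZMod N) ((k + ·) '' Set.Iio q) := by
  rintro _ ⟨i, hi, rfl⟩ _ ⟨j, hj, rfl⟩ h
  rw [ZMod.natCast_eq_natCast_iff] at h
  rw [(Nat.ModEq.add_left_cancel' k h).eq_of_lt_of_lt (hi.trans_le hqN) (hj.trans_le hqN)]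

theorem Fin.sub_one_ne_add_one {n : ℕ} (v : Fin (n + 3)) : v - 1 ≠ v + 1 := by
  rw [ne_eq, sub_eq_iff_eq_add, add_assoc, left_eq_add, Fin.ext_iff]
  simp [Fin.val_add, Nat.mod_eq_of_lt]

namespace SimpleGraph

section Incidence

variable {V : Type*} (G : SimpleGraph V) [DecidableEq V] (v : V) [Fintype (G.neighborSet v)]

theorem incidenceFinset_eq_map_neighborFinset :
    G.incidenceFinset v = (G.neighborFinset v).map (Sym2.mkEmbedding v) := by
  ext e
  simp only [mem_incidenceFinset, mem_map, mem_neighborFinset]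
  constructor
  · intro he
    exact ⟨_, G.incidence_other_prop he, Sym2.other_spec' he.2⟩
  · rintro ⟨w, hw, rfl⟩
    exact G.mem_incidence_iff_neighbor.mpr hw

theorem sum_incidenceFinset_eq_sum_neighborFinset {M : Type*} [AddCommMonoid M]
    (f : Sym2 V → M) : ∑ e ∈ G.incidenceFinset v, f e = ∑ w ∈ G.neighborFinset v, f s(v, w) := by
  rw [incidenceFinset_eq_map_neighborFinset, sum_map]
  rfl

end Incidence

theorem cycleGraph_adj_sub_one {n : ℕ} (v : Fin (n + 2)) : (cycleGraph (n + 2)).Adj v (v - 1) :=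
  cycleGraph_adj.mpr (Or.inl (sub_sub_cancel v 1))

theorem cycleGraph_adj_add_one {n : ℕ} (v : Fin (n + 2)) : (cycleGraph (n + 2)).Adj v (v + 1) :=
  cycleGraph_adj.mpr (Or.inr (add_sub_cancel_left v 1))

theorem card_edgeFinset_cycleGraph (n : ℕ) [inst : Fintype (cycleGraph (n + 3)).edgeSet] :
    #(cycleGraph (n + 3)).edgeFinset = n + 3 := by
  obtain rfl : inst = (cycleGraph (n + 3)).fintypeEdgeSet := Subsingleton.elim _ _
  have h := sum_degrees_eq_twice_card_edges (cycleGraph (n + 3))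
  simp only [cycleGraph_degree_three_le, sum_const, card_univ, Fintype.card_fin,
    smul_eq_mul] at h
  omega

theorem cycleGraph_edge_ne_edge_add_two {n : ℕ} (v : Fin (n + 3)) :
    s(v - 1, v) ≠ s(v + 1, v + 1 + 1) := by
  rw [ne_eq, Sym2.eq_iff, not_or]
  exact ⟨fun h => v.sub_one_ne_add_one h.1, fun h => one_ne_zero (left_eq_add.mp h.2)⟩

theorem cycleGraph_sum_incidenceFinset {n : ℕ} {M : Type*} [AddCommMonoid M]
    (f : Sym2 (Fin (n + 3)) → M) (v : Fin (n + 3)) :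
    ∑ e ∈ (cycleGraph (n + 3)).incidenceFinset v, f e = f s(v - 1, v) + f s(v, v + 1) := by
  have hN : (cycleGraph (n + 3)).neighborFinset v = {v - 1, v + 1} := by
    ext w
    rw [mem_neighborFinset, ← mem_neighborSet, cycleGraph_neighborSet]
    simp
  rw [sum_incidenceFinset_eq_sum_neighborFinset, hN, sum_pair v.sub_one_ne_add_one, Sym2.eq_swap]

theorem cycleGraph_eq_of_forall_sum_incidenceFinset_eq {n : ℕ} {M : Type*} [AddCancelCommMonoid M]
    {f : Sym2 (Fin (n + 3)) → M} {c : M}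
    (h : ∀ v, ∑ e ∈ (cycleGraph (n + 3)).incidenceFinset v, f e = c) (v : Fin (n + 3)) :
    f s(v - 1, v) = f s(v + 1, v + 1 + 1) := by
  have hv := (h v).trans (h (v + 1)).symm
  rw [cycleGraph_sum_incidenceFinset, cycleGraph_sum_incidenceFinset, add_sub_cancel_right,
    add_comm] at hv
  exact add_left_cancel hv

end SimpleGraph

open SimpleGraph in
theorem cycle_not_kEdgeMagic (n : ℕ) (hn : 3 ≤ n) (k : ℕ) :
    ¬ IsKEdgeMagic (SimpleGraph.cycleGraph n) k := by
  obtain ⟨m, rfl⟩ : ∃ m, n = m + 3 := ⟨n - 3, by omega⟩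
  rintro ⟨f, hbij, c, hc⟩
  simp only [card_edgeFinset_cycleGraph] at hbij
  have hinj : Set.InjOn (fun e => (f e : ZMod (Fintype.card (Fin (m + 3)))))
      (cycleGraph (m + 3)).edgeSet :=
    (ZMod.injOn_natCast_image_add_Iio k (Fintype.card_fin _).ge).comp hbij.injOn hbij.mapsTo
  simp only [Nat.cast_sum] at hc
  -- `hc` carries the classical `DecidableEq`/`Fintype` instances fixed in `IsKEdgeMagic`.
  exact cycleGraph_edge_ne_edge_add_two 0 <| hinj (cycleGraph_adj_sub_one 0).symm
    (cycleGraph_adj_add_one _) (cycleGraph_eq_of_forall_sum_incidenceFinset_eq (by convert hc) 0)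
end
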